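/- Let b ≥ 1, let (V, Θ) be a random vector in ℝ^b × ℝ^b with V_j ≠ 0 almost surely and E‖Θ‖₂² < ∞, and let σ, λ, κ > 0. Suppose τ, β > 0 satisfy the stationarity conditions 0 = σ²/β + β(1 − κ) − 2τ + βλ² E[(1/b)∑_{j=1}^b (Θ_j² + β²κ)/(τV_j² + βλ)²] and 0 = −σ²/β² + (1 − κ) + 2βκλ E[(1/b)∑_{j=1}^b 1/(τV_j² + βλ)] − λ² E[(1/b)∑_{j=1}^b (Θ_j² + β²κ)/(τV_j² + βλ)²]. Then γ := τ/β satisfies the fixed-point equation γ = 1 − κ + λκ E[(1/b)∑_{j=1}^b 1/(γV_j² + λ)], and β satisfies β²·( 2γ + κ − 1 − λ²κ E[(1/b)∑_{j=1}^b 1/(γV_j² + λ)²] ) = σ² + λ² E[(1/b)∑_{j=1}^b Θ_j²/(γV_j² + λ)²]. -/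
import Mathlib


open MeasureTheory ProbabilityTheory

/-- Let `b ≥ 1`, `(V, Θ)` a random vector in `ℝ^b × ℝ^b` with `V_j ≠ 0` a.s.
and `E‖Θ‖₂² < ∞`, and `σ, λ, κ > 0`. If `τ, β > 0` satisfy the two stationarity conditions
of the scalar max–min objective, then `γ := τ/β` satisfies the fixed-point equation
`γ = 1 − κ + λκ E[(1/b)∑ⱼ 1/(γVⱼ² + λ)]` and `β` satisfies
`β²(2γ + κ − 1 − λ²κ E[(1/b)∑ⱼ 1/(γVⱼ² + λ)²]) = σ² + λ² E[(1/b)∑ⱼ Θⱼ²/(γVⱼ² + λ)²]`. -/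
theorem saddle_point_fixed_point_equations {b : ℕ} (hb : 1 ≤ b)
    {Ω : Type*} [MeasurableSpace Ω] (P : Measure Ω) [IsProbabilityMeasure P]
    (V Θ : Ω → Fin b → ℝ) (hVmeas : Measurable V) (hΘmeas : Measurable Θ)
    (hVne : ∀ᵐ ω ∂P, ∀ j, V ω j ≠ 0)
    (hΘmom : Integrable (fun ω => ∑ j, Θ ω j ^ 2) P)
    (σ lam κ : ℝ) (hσ : 0 < σ) (hlam : 0 < lam) (hκ : 0 < κ)
    (τ β : ℝ) (hτ : 0 < τ) (hβ : 0 < β)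
    (hstat_τ : 0 = σ ^ 2 / β + β * (1 - κ) - 2 * τ +
      β * lam ^ 2 *
        ∫ ω, (1 / (b : ℝ)) * ∑ j, (Θ ω j ^ 2 + β ^ 2 * κ) / (τ * V ω j ^ 2 + β * lam) ^ 2 ∂P)
    (hstat_β : 0 = -(σ ^ 2 / β ^ 2) + (1 - κ) +
      2 * β * κ * lam * ∫ ω, (1 / (b : ℝ)) * ∑ j, 1 / (τ * V ω j ^ 2 + β * lam) ∂P -
      lam ^ 2 *
        ∫ ω, (1 / (b : ℝ)) * ∑ j, (Θ ω j ^ 2 + β ^ 2 * κ) / (τ * V ω j ^ 2 + β * lam) ^ 2 ∂P) :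
    τ / β = 1 - κ +
        lam * κ * ∫ ω, (1 / (b : ℝ)) * ∑ j, 1 / ((τ / β) * V ω j ^ 2 + lam) ∂P ∧
    β ^ 2 * (2 * (τ / β) + κ - 1 -
        lam ^ 2 * κ * ∫ ω, (1 / (b : ℝ)) * ∑ j, 1 / ((τ / β) * V ω j ^ 2 + lam) ^ 2 ∂P) =
      σ ^ 2 + lam ^ 2 *
        ∫ ω, (1 / (b : ℝ)) * ∑ j, Θ ω j ^ 2 / ((τ / β) * V ω j ^ 2 + lam) ^ 2 ∂P := by
  have hβ0 : β ≠ 0 := hβ.ne'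
  have hb0 : (b : ℝ) ≠ 0 := by positivity
  have hD : ∀ ω j, 0 < τ * V ω j ^ 2 + β * lam := fun ω j => by positivity
  have keyrw : ∀ (ω : Ω) (j : Fin b),
      (τ / β) * V ω j ^ 2 + lam = (τ * V ω j ^ 2 + β * lam) / β := by
    intro ω j; field_simp
  have hVj : ∀ j : Fin b, Measurable fun ω => V ω j :=
    fun j => (measurable_pi_apply j).comp hVmeas
  have hΘj : ∀ j : Fin b, Measurable fun ω => Θ ω j :=
    fun j => (measurable_pi_apply j).comp hΘmeas
  -- abbreviations
  set A := ∫ ω, (1 / (b : ℝ)) * ∑ j, 1 / (τ * V ω j ^ 2 + β * lam) ∂P with hA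
  set B := ∫ ω, (1 / (b : ℝ)) *
      ∑ j, (Θ ω j ^ 2 + β ^ 2 * κ) / (τ * V ω j ^ 2 + β * lam) ^ 2 ∂P with hB
  set C2 := ∫ ω, (1 / (b : ℝ)) * ∑ j, 1 / (τ * V ω j ^ 2 + β * lam) ^ 2 ∂P with hC2
  set C3 := ∫ ω, (1 / (b : ℝ)) * ∑ j, Θ ω j ^ 2 / (τ * V ω j ^ 2 + β * lam) ^ 2 ∂P with hC3
  -- integrability
  have intf2 : Integrable
      (fun ω => (1 / (b : ℝ)) * ∑ j, 1 / (τ * V ω j ^ 2 + β * lam) ^ 2) P := by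
    apply Integrable.const_mul
    apply integrable_finset_sum
    intro j _
    have meas : Measurable fun ω => 1 / (τ * V ω j ^ 2 + β * lam) ^ 2 :=
      measurable_const.div (((((hVj j).pow_const 2).const_mul τ).add_const (β * lam)).pow_const 2)
    refine Integrable.mono' (integrable_const (((β * lam) ^ 2)⁻¹)) meas.aestronglyMeasurable ?_
    filter_upwards with ω
    have hd := hD ω j
    rw [Real.norm_eq_abs, abs_of_nonneg (by positivity), one_div]
    apply inv_anti₀ (by positivity)
    have hle : β * lam ≤ τ * V ω j ^ 2 + β * lam := le_add_of_nonneg_left (by positivity)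
    exact pow_le_pow_left₀ (by positivity) hle 2
  have intf3 : Integrable
      (fun ω => (1 / (b : ℝ)) * ∑ j, Θ ω j ^ 2 / (τ * V ω j ^ 2 + β * lam) ^ 2) P := by
    apply Integrable.const_mul
    apply integrable_finset_sum
    intro j _
    have meas : Measurable fun ω => Θ ω j ^ 2 / (τ * V ω j ^ 2 + β * lam) ^ 2 :=
      ((hΘj j).pow_const 2).div (((((hVj j).pow_const 2).const_mul τ).add_const (β * lam)).pow_const 2)
    refine Integrable.mono' (hΘmom.const_mul (((β * lam) ^ 2)⁻¹)) meas.aestronglyMeasurable ?_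
    filter_upwards with ω
    have hd := hD ω j
    have h1 : Θ ω j ^ 2 ≤ ∑ i, Θ ω i ^ 2 :=
      Finset.single_le_sum (fun i _ => sq_nonneg (Θ ω i)) (Finset.mem_univ j)
    rw [Real.norm_eq_abs, abs_of_nonneg (by positivity)]
    have h2 : (β * lam) ^ 2 ≤ (τ * V ω j ^ 2 + β * lam) ^ 2 := by
      have hle : β * lam ≤ τ * V ω j ^ 2 + β * lam := le_add_of_nonneg_left (by positivity)
      exact pow_le_pow_left₀ (by positivity) hle 2
    calc Θ ω j ^ 2 / (τ * V ω j ^ 2 + β * lam) ^ 2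
        ≤ Θ ω j ^ 2 / (β * lam) ^ 2 := by
          apply div_le_div_of_nonneg_left (sq_nonneg _) (by positivity) h2
      _ = ((β * lam) ^ 2)⁻¹ * Θ ω j ^ 2 := by rw [div_eq_mul_inv, mul_comm]
      _ ≤ ((β * lam) ^ 2)⁻¹ * ∑ i, Θ ω i ^ 2 := by
          apply mul_le_mul_of_nonneg_left h1 (by positivity)
  -- splitting B
  have hsplit : B = C3 + β ^ 2 * κ * C2 := by
    rw [hB, hC3, hC2, ← integral_const_mul, ← integral_add intf3 (intf2.const_mul _)]
    refine integral_congr_ae (Filter.Eventually.of_forall fun ω => ?_)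
    simp only [add_div]
    rw [Finset.sum_add_distrib, mul_add]
    congr 1
    rw [Finset.mul_sum, mul_left_comm, Finset.mul_sum, Finset.mul_sum]
    exact Finset.sum_congr rfl fun j _ => by rw [mul_one_div]
  -- integral rewrites
  have R1 : (∫ ω, (1 / (b : ℝ)) * ∑ j, 1 / ((τ / β) * V ω j ^ 2 + lam) ∂P) = β * A := by
    rw [hA, ← integral_const_mul]
    refine integral_congr_ae (Filter.Eventually.of_forall fun ω => ?_)
    dsimp only
    rw [Finset.mul_sum, mul_left_comm, Finset.mul_sum, Finset.mul_sum]
    refine Finset.sum_congr rfl fun j _ => ?_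
    rw [keyrw ω j, one_div_div]
    ring
  have R2 : (∫ ω, (1 / (b : ℝ)) * ∑ j, 1 / ((τ / β) * V ω j ^ 2 + lam) ^ 2 ∂P)
      = β ^ 2 * C2 := by
    rw [hC2, ← integral_const_mul]
    refine integral_congr_ae (Filter.Eventually.of_forall fun ω => ?_)
    dsimp only
    rw [Finset.mul_sum, mul_left_comm, Finset.mul_sum, Finset.mul_sum]
    refine Finset.sum_congr rfl fun j _ => ?_
    rw [keyrw ω j, div_pow, one_div_div]
    ring
  have R3 : (∫ ω, (1 / (b : ℝ)) * ∑ j, Θ ω j ^ 2 / ((τ / β) * V ω j ^ 2 + lam) ^ 2 ∂P)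
      = β ^ 2 * C3 := by
    rw [hC3, ← integral_const_mul]
    refine integral_congr_ae (Filter.Eventually.of_forall fun ω => ?_)
    dsimp only
    rw [Finset.mul_sum, mul_left_comm, Finset.mul_sum, Finset.mul_sum]
    refine Finset.sum_congr rfl fun j _ => ?_
    rw [keyrw ω j, div_pow, div_div_eq_mul_div]
    ring
  -- algebra
  have e0 : β * (σ ^ 2 / β ^ 2) = σ ^ 2 / β := by field_simp
  have hσβ : β * (σ ^ 2 / β) = σ ^ 2 := by field_simp
  have hτβ2 : β ^ 2 * (τ / β) = τ * β := by field_simp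
  have comb : 0 = σ ^ 2 / β - β * (σ ^ 2 / β ^ 2) + 2 * β * (1 - κ) - 2 * τ
      + 2 * β ^ 2 * κ * lam * A := by
    linear_combination hstat_τ + β * hstat_β
  have hτeq : τ = β * (1 - κ) + β ^ 2 * κ * lam * A := by linarith [comb, e0]
  have h2τ : 2 * τ = σ ^ 2 / β + β * (1 - κ) + β * lam ^ 2 * B := by linarith [hstat_τ]
  constructor
  · rw [R1]
    rw [div_eq_iff hβ0, hτeq]
    ring
  · rw [R2, R3]
    linear_combination 2 * hτβ2 + β * h2τ + hσβ + lam ^ 2 * β ^ 2 * hsplit
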